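/- Corollary 2: In an n-player mining game (m₁,…,mₙ) with m₁ ≥ m₂ ≥ ⋯ ≥ mₙ, if m₁ ≤ 1/3 (i.e., the largest pool controls at most one third of the total hashing power), then the all-RHonest strategy profile (Q = ∅) is a pure Nash equilibrium. -/

import Mathlib

/-- `f(y) := y²·(2−3y)/(1−2y)`. -/
noncomputable def f (y : ℝ) : ℝ := y^2 * (2 - 3*y) / (1 - 2*y)

/-- `g(y) := (−y³ + 2y² + y − 1)/(2y² + 4y − 3)`. -/
noncomputable def g (y : ℝ) : ℝ := (-y^3 + 2*y^2 + y - 1) / (2*y^2 + 4*y - 3)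

/-- `S(Q) := ∑_{j∈Q} m_j(1−m_j)`. -/
noncomputable def S {n : ℕ} (m : Fin n → ℝ) (Q : Finset (Fin n)) : ℝ :=
  ∑ j ∈ Q, m j * (1 - m j)

/-- Expected reward of pool `i` when the set of insightful pools is `Q`. -/
noncomputable def ER {n : ℕ} (m : Fin n → ℝ) (Q : Finset (Fin n)) (i : Fin n) : ℝ :=
  if i ∈ Q then f (m i) + 2 * m i * S m Q else m i + 2 * m i * S m Q

/-- Relative revenue (utility) of pool `i`. -/
noncomputable def RREV {n : ℕ} (m : Fin n → ℝ) (Q : Finset (Fin n)) (i : Fin n) : ℝ :=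
  ER m Q i / ∑ j, ER m Q j

/-- The profile obtained from `Q` when pool `i` unilaterally switches its strategy. -/
def switch {n : ℕ} (i : Fin n) (Q : Finset (Fin n)) : Finset (Fin n) :=
  if i ∈ Q then Q.erase i else insert i Q

/-- `Q` is a pure Nash equilibrium: no pool can strictly increase its relative
revenue by unilaterally switching its own strategy. -/
def IsNash {n : ℕ} (m : Fin n → ℝ) (Q : Finset (Fin n)) : Prop :=
  ∀ i : Fin n, RREV m (switch i Q) i ≤ RREV m Q i

/-- Corollary 2: if `m₁ ≤ 1/3`, then all-RHonest (`Q = ∅`) is a pure Nash equilibrium. -/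
theorem honest_nash_of_third (n : ℕ) (hn : 2 ≤ n) (m : Fin n → ℝ)
    (hmono : ∀ i j : Fin n, i ≤ j → m j ≤ m i)
    (hpos : ∀ i, 0 < m i) (hhalf : ∀ i, m i < 1/2)
    (hsum : ∑ i, m i = 1)
    (hthird : m ⟨0, by omega⟩ ≤ 1/3) :
    IsNash m (∅ : Finset (Fin n)) := by

  intro i
  set x := m i with hxdef
  have hx0 : 0 < x := hpos i
  have hx2 : x < 1/2 := hhalf i
  have hx3 : x ≤ 1/3 := le_trans (hmono ⟨0, by omega⟩ i (by simp [Fin.le_def])) hthird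
  have hne : (1 - 2*x) ≠ 0 := by nlinarith
  -- RREV at ∅ is x
  have hS0 : S m (∅ : Finset (Fin n)) = 0 := by simp [S]
  have hrrev0 : RREV m (∅ : Finset (Fin n)) i = x := by
    simp [RREV, ER, hS0, hsum]; rfl
  have hswitch : switch i (∅ : Finset (Fin n)) = {i} := by simp [switch]
  set s := x * (1 - x) with hsdef
  have hSQ : S m ({i} : Finset (Fin n)) = s := by simp [S]; rfl
  have hER : ∀ j, ER m ({i} : Finset (Fin n)) j
      = (m j + 2 * m j * s) + (if j = i then f x - x else 0) := by
    intro j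
    by_cases hj : j = i <;> simp [ER, hSQ, hj] <;> ring
  have hsum' : ∑ j, ER m ({i} : Finset (Fin n)) j = 1 + 2*s + f x - x := by
    rw [Finset.sum_congr rfl (fun j _ => hER j), Finset.sum_add_distrib,
      Finset.sum_ite_eq' Finset.univ i (fun _ => f x - x)]
    have : ∑ j, (m j + 2 * m j * s) = 1 + 2 * s := by
      rw [Finset.sum_add_distrib, hsum]
      have h2 : ∑ j, 2 * m j * s = 2 * s := by
        rw [← Finset.sum_mul, ← Finset.mul_sum, hsum]; ring
      rw [h2]
    rw [this]; simp; ring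
  have hfx : f x * (1 - 2*x) = x^2 * (2 - 3*x) := by
    rw [f, div_mul_eq_mul_div, mul_div_assoc, div_self hne, mul_one]
  have hf0 : 0 ≤ f x := by
    have : 0 ≤ x^2 * (2 - 3*x) / (1 - 2*x) := by
      apply div_nonneg <;> nlinarith
    simpa [f] using this
  have hden : 0 < 1 + 2*s + f x - x := by nlinarith
  rw [hswitch, hrrev0, RREV, hsum', hER i]
  simp only [if_pos rfl, ← hxdef]
  rw [div_le_iff₀ hden]
  have h12 : (0:ℝ) < 1 - 2*x := by linarith
  have hfle : f x ≤ x := by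
    nlinarith [hfx, mul_nonneg (mul_nonneg hx0.le (by linarith : (0:ℝ) ≤ 1 - 3*x))
      (by linarith : (0:ℝ) ≤ 1 - x)]
  simp only [if_true]
  nlinarith [mul_nonneg (by linarith : (0:ℝ) ≤ 1 - x) (by linarith : 0 ≤ x - f x)]
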